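/- Let n ≥ 2 and d ∈ {1,…,⌊n/2⌋}. Let R₁,…,R_d be rational subspaces of ℝ^n in direct sum, and for each j let A_j ⊆ R_j be a one-dimensional subspace; set A = A₁ ⊕ ⋯ ⊕ A_d, and for J ⊆ {1,…,d} set A_J = ⊕_{j∈J} A_j. Let e ∈ {1,…,n−1} and k ∈ {1,…,min(d,e) − g(d,e,n)}. Then A is (e,k)-irrational if and only if for every subset J ⊆ {1,…,d} of cardinality k + g(d,e,n), the subspace A_J is (e, k + g(d,e,n) − g(#J,e,n))-irrational. -/

import Mathlib

noncomputable section

open Finset Module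

/-- A vector of `ℝⁿ` with integer coordinates. -/
def IsIntVec {n : ℕ} (v : EuclideanSpace ℝ (Fin n)) : Prop :=
  ∀ i, ∃ z : ℤ, v i = (z : ℝ)

/-- A rational subspace of `ℝⁿ`: one spanned by vectors with rational coordinates. -/
def IsRationalSubspace {n : ℕ} (B : Submodule ℝ (EuclideanSpace ℝ (Fin n))) : Prop :=
  ∃ s : Set (EuclideanSpace ℝ (Fin n)),
    (∀ v ∈ s, ∀ i, ∃ q : ℚ, v i = (q : ℝ)) ∧ Submodule.span ℝ s = B

/-- `A` is `(e,j)`-irrational: every rational subspace `B` of dimension `e` satisfies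
`dim (A ⊓ B) < j + g(dim A, e, n)` where `g(d,e,n) = max 0 (d+e-n)`. -/
def IsIrrational {n : ℕ} (A : Submodule ℝ (EuclideanSpace ℝ (Fin n))) (e j : ℕ) : Prop :=
  ∀ B : Submodule ℝ (EuclideanSpace ℝ (Fin n)),
    IsRationalSubspace B → finrank ℝ B = e →
      finrank ℝ ↥(A ⊓ B) < j + (finrank ℝ A + e - n)

/-- The angle `ω(X,Y) = ‖X∧Y‖ / (‖X‖·‖Y‖)`. -/
def omegaAngle {n : ℕ} (X Y : EuclideanSpace ℝ (Fin n)) : ℝ :=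
  Real.sqrt (‖X‖ ^ 2 * ‖Y‖ ^ 2 - (inner ℝ X Y : ℝ) ^ 2) / (‖X‖ * ‖Y‖)

/-- First angle `ψ₁(A,B)` between two subspaces. -/
def psiOne {n : ℕ} (A B : Submodule ℝ (EuclideanSpace ℝ (Fin n))) : ℝ :=
  sInf {t | ∃ X ∈ A, X ≠ 0 ∧ ∃ Y ∈ B, Y ≠ 0 ∧ t = omegaAngle X Y}

/-- `‖X₁ ∧ ⋯ ∧ X_e‖`, as the square root of the Gram determinant. -/
def gramNorm {n e : ℕ} (X : Fin e → EuclideanSpace ℝ (Fin n)) : ℝ :=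
  Real.sqrt (Matrix.of fun i j : Fin e => (inner ℝ (X i) (X j) : ℝ)).det

/-- `X` is a `ℤ`-basis of the lattice `B ∩ ℤⁿ`. -/
def IsZBasis {n e : ℕ} (X : Fin e → EuclideanSpace ℝ (Fin n))
    (B : Submodule ℝ (EuclideanSpace ℝ (Fin n))) : Prop :=
  (∀ i, X i ∈ B) ∧ (∀ i, IsIntVec (X i)) ∧ LinearIndependent ℝ X ∧
    ∀ v ∈ B, IsIntVec v → ∃ c : Fin e → ℤ, v = ∑ i, (c i : ℝ) • X i

/-- The height `H(B)` of a rational subspace: the common value of `‖X₁ ∧ ⋯ ∧ X_e‖`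
over `ℤ`-bases of the lattice `B ∩ ℤⁿ`. -/
def height {n : ℕ} (B : Submodule ℝ (EuclideanSpace ℝ (Fin n))) : ℝ :=
  sSup {h | ∃ e : ℕ, ∃ X : Fin e → EuclideanSpace ℝ (Fin n), IsZBasis X B ∧ h = gramNorm X}

/-- The Diophantine exponent `μ_n(A|e)₁ ∈ ℝ ∪ {+∞}`. -/
def diophExp {n : ℕ} (A : Submodule ℝ (EuclideanSpace ℝ (Fin n))) (e : ℕ) : EReal :=
  sSup {x : EReal | ∃ μ : ℝ, x = (μ : ℝ) ∧ 0 < μ ∧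
    {B : Submodule ℝ (EuclideanSpace ℝ (Fin n)) |
      IsRationalSubspace B ∧ finrank ℝ B = e ∧ psiOne A B ≤ height B ^ (-μ)}.Infinite}

/-! If `dim (A ∩ B) ≥ m := k + g(d,e,n)` for a rational `B` of dimension `e`, let `E_j` be the
smallest rational subspace containing `A_j`; then `E_j ⊆ R_j`, so the `E_j` are independent.
Complete `A ∩ B` by lines `A_i`, `i ∈ T`, to all of `A`, and project rationally along
`⊕_{i ∈ T} E_i` onto a rational complement containing `⊕_{i ∉ T} E_i`. The image of `B` is
rational and contains every `A_i`, hence every `E_i`, with `i ∉ T`. This gives `J` with `#J = m`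
and `dim ⊕_{j ∈ J} E_j ≤ e`, and a rational `e`-space containing `⊕_{j ∈ J} E_j` contradicts the
irrationality of `A_J`. The converse is the monotonicity of `dim (· ∩ B)`. -/

theorem Finset.exists_subset_disjoint_sup_le {α ι : Type*} [Lattice α] [OrderBot α]
    [IsModularLattice α] [DecidableEq ι] {f : ι → α} (hf : ∀ i, IsAtom (f i)) (c : α)
    (s : Finset ι) : ∃ t ⊆ s, Disjoint c (t.sup f) ∧ s.sup f ≤ c ⊔ t.sup f := by
  induction s using Finset.induction_on with
  | empty => exact ⟨∅, subset_rfl, by simp, by simp⟩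
  | insert a s _ ih =>
    obtain ⟨t, hts, hdisj, hle⟩ := ih
    rw [Finset.sup_insert]
    by_cases ha : f a ≤ c ⊔ t.sup f
    · exact ⟨t, hts.trans (Finset.subset_insert a s), hdisj, sup_le ha hle⟩
    · refine ⟨insert a t, Finset.insert_subset_insert a hts, ?_, ?_⟩ <;> rw [Finset.sup_insert]
      · rw [sup_comm]
        exact hdisj.disjoint_sup_right_of_disjoint_sup_left
          ((hf a).not_le_iff_disjoint.mp ha).symm
      · exact sup_le (le_sup_of_le_right le_sup_left)
          (hle.trans (sup_le_sup_left le_sup_right c))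

theorem Finset.SupIndep.finrank_sup {K V ι : Type*} [DivisionRing K] [AddCommGroup V]
    [Module K V] [FiniteDimensional K V] {s : Finset ι} {f : ι → Submodule K V}
    (h : s.SupIndep f) : finrank K ↥(s.sup f) = ∑ i ∈ s, finrank K ↥(f i) := by
  classical
  induction s using Finset.induction_on with
  | empty => simp
  | insert a s ha ih =>
    have hdisj : Disjoint (f a) (s.sup f) :=
      h (Finset.subset_insert a s) (Finset.mem_insert_self a s) ha
    have hsum := Submodule.finrank_sup_add_finrank_inf_eq (f a) (s.sup f)
    rw [hdisj.eq_bot, finrank_bot, add_zero] at hsum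
    rw [Finset.sup_insert, hsum, Finset.sum_insert ha, ih (h.subset (Finset.subset_insert a s))]

theorem iSupIndep.finrank_biSup_eq_card {K V ι : Type*} [DivisionRing K] [AddCommGroup V]
    [Module K V] [FiniteDimensional K V] {f : ι → Submodule K V} (h : iSupIndep f)
    (hf : ∀ i, finrank K (f i) = 1) (s : Finset ι) : finrank K ↥(⨆ i ∈ s, f i) = s.card := by
  rw [← Finset.sup_eq_iSup, (h.supIndep' s).finrank_sup]
  simp [hf]

lemma Submodule.exists_le_finrank_eq {K V : Type*} [DivisionRing K] [AddCommGroup V]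
    [Module K V] [FiniteDimensional K V] (W : Submodule K V) {m : ℕ}
    (hWm : finrank K W ≤ m) (hm : m ≤ finrank K V) : ∃ W', W ≤ W' ∧ finrank K W' = m := by
  obtain ⟨k, rfl⟩ := Nat.exists_eq_add_of_le hWm
  induction k with
  | zero => exact ⟨W, le_rfl, rfl⟩
  | succ k ih =>
    obtain ⟨W', hWW', hW'⟩ := ih (by omega) (by omega)
    obtain ⟨v, hv⟩ := W'.exists_of_finrank_lt (by omega)
    have hv' : v ∉ W' := by simpa using hv 1 one_ne_zero
    exact ⟨W' ⊔ Submodule.span K {v}, hWW'.trans le_sup_left,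
      by rw [Submodule.finrank_sup_span_singleton hv', hW', add_assoc]⟩

namespace RationalStructure

variable {n : ℕ}

def ratVec : (Fin n → ℚ) →ₗ[ℚ] EuclideanSpace ℝ (Fin n) :=
  (WithLp.linearEquiv 2 ℚ (Fin n → ℝ)).symm.toLinearMap ∘ₗ
    LinearMap.compLeft (Algebra.linearMap ℚ ℝ) (Fin n)

@[simp] lemma ratVec_apply (x : Fin n → ℚ) (i : Fin n) : ratVec x i = x i := rfl

lemma ratVec_injective : Function.Injective (ratVec (n := n)) := fun x y h =>
  funext fun i => by simpa using congr($h i)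

lemma linearIndependent_ratVec_comp {ι : Type*} {v : ι → Fin n → ℚ}
    (hv : LinearIndependent ℚ v) : LinearIndependent ℝ (ratVec ∘ v) := by
  have h : LinearIndependent ℝ fun i => algebraMap ℚ ℝ ∘ v i :=
    linearIndependent_algebraMap_comp_iff.mpr hv
  exact h.map' (WithLp.linearEquiv 2 ℝ (Fin n → ℝ)).symm.toLinearMap (LinearEquiv.ker _)

def realSpan (W : Submodule ℚ (Fin n → ℚ)) : Submodule ℝ (EuclideanSpace ℝ (Fin n)) :=
  Submodule.span ℝ (ratVec '' W)

lemma realSpan_span (s : Set (Fin n → ℚ)) :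
    realSpan (Submodule.span ℚ s) = Submodule.span ℝ (ratVec '' s) := by
  rw [realSpan, ← Submodule.map_coe, Submodule.map_span, Submodule.span_span_of_tower]

lemma realSpan_mono {W W' : Submodule ℚ (Fin n → ℚ)} (h : W ≤ W') : realSpan W ≤ realSpan W' :=
  Submodule.span_mono (Set.image_mono h)

lemma realSpan_sup (W W' : Submodule ℚ (Fin n → ℚ)) :
    realSpan (W ⊔ W') = realSpan W ⊔ realSpan W' := by
  rw [← Submodule.span_eq W, ← Submodule.span_eq W', ← Submodule.span_union, realSpan_span,
    realSpan_span, realSpan_span, Set.image_union, Submodule.span_union]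

lemma finrank_realSpan (W : Submodule ℚ (Fin n → ℚ)) :
    finrank ℝ (realSpan W) = finrank ℚ W := by
  let b := Module.finBasis ℚ W
  have hW : W = Submodule.span ℚ (Set.range (W.subtype ∘ b)) := by
    rw [Set.range_comp, ← Submodule.map_span, b.span_eq, Submodule.map_top, W.range_subtype]
  rw [hW, realSpan_span, ← Set.range_comp, finrank_span_eq_card
      (linearIndependent_ratVec_comp (b.linearIndependent.map' W.subtype W.ker_subtype)),
    ← hW, Fintype.card_fin]

lemma realSpan_inf (W W' : Submodule ℚ (Fin n → ℚ)) :
    realSpan (W ⊓ W') = realSpan W ⊓ realSpan W' := by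
  refine Submodule.eq_of_le_of_finrank_le
    (le_inf (realSpan_mono inf_le_left) (realSpan_mono inf_le_right)) ?_
  have hℝ := Submodule.finrank_sup_add_finrank_inf_eq (realSpan W) (realSpan W')
  have hℚ := Submodule.finrank_sup_add_finrank_inf_eq W W'
  rw [← realSpan_sup, finrank_realSpan, finrank_realSpan, finrank_realSpan] at hℝ
  rw [finrank_realSpan]
  omega

lemma isRationalSubspace_iff {B : Submodule ℝ (EuclideanSpace ℝ (Fin n))} :
    IsRationalSubspace B ↔ ∃ W, realSpan W = B := by
  constructor
  · rintro ⟨s, hs, rfl⟩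
    have hsr : s ⊆ Set.range ratVec := fun v hv =>
      ⟨fun i => (hs v hv i).choose, by ext i; exact (hs v hv i).choose_spec.symm⟩
    exact ⟨Submodule.span ℚ (ratVec ⁻¹' s), by
      rw [realSpan_span, Set.image_preimage_eq_of_subset hsr]⟩
  · rintro ⟨W, rfl⟩
    exact ⟨ratVec '' W, by rintro - ⟨x, -, rfl⟩ i; exact ⟨x i, rfl⟩, rfl⟩

def realExt (q : (Fin n → ℚ) →ₗ[ℚ] Fin n → ℚ) :
    EuclideanSpace ℝ (Fin n) →ₗ[ℝ] EuclideanSpace ℝ (Fin n) :=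
  Matrix.toLpLin 2 2 ((LinearMap.toMatrix' q).map (algebraMap ℚ ℝ))

lemma realExt_ratVec (q : (Fin n → ℚ) →ₗ[ℚ] Fin n → ℚ) (x : Fin n → ℚ) :
    realExt q (ratVec x) = ratVec (q x) := by
  ext i
  rw [realExt, Matrix.toLpLin_apply, ratVec_apply, ← LinearMap.toMatrix'_mulVec]
  exact (RingHom.map_mulVec (algebraMap ℚ ℝ) (LinearMap.toMatrix' q) x i).symm

lemma map_realExt_realSpan (q : (Fin n → ℚ) →ₗ[ℚ] Fin n → ℚ) (W : Submodule ℚ (Fin n → ℚ)) :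
    (realSpan W).map (realExt q) = realSpan (W.map q) := by
  rw [realSpan, Submodule.map_span, realSpan, Submodule.map_coe, Set.image_image,
    Set.image_image]
  simp_rw [realExt_ratVec]

end RationalStructure

open RationalStructure

section

variable {n : ℕ}

lemma IsRationalSubspace.sup {B B' : Submodule ℝ (EuclideanSpace ℝ (Fin n))}
    (hB : IsRationalSubspace B) (hB' : IsRationalSubspace B') : IsRationalSubspace (B ⊔ B') := by
  obtain ⟨W, rfl⟩ := isRationalSubspace_iff.mp hB
  obtain ⟨W', rfl⟩ := isRationalSubspace_iff.mp hB'
  exact isRationalSubspace_iff.mpr ⟨W ⊔ W', realSpan_sup W W'⟩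

lemma IsRationalSubspace.inf {B B' : Submodule ℝ (EuclideanSpace ℝ (Fin n))}
    (hB : IsRationalSubspace B) (hB' : IsRationalSubspace B') : IsRationalSubspace (B ⊓ B') := by
  obtain ⟨W, rfl⟩ := isRationalSubspace_iff.mp hB
  obtain ⟨W', rfl⟩ := isRationalSubspace_iff.mp hB'
  exact isRationalSubspace_iff.mpr ⟨W ⊓ W', realSpan_inf W W'⟩

lemma isRationalSubspace_bot : IsRationalSubspace (⊥ : Submodule ℝ (EuclideanSpace ℝ (Fin n))) :=
  isRationalSubspace_iff.mpr ⟨⊥, by simp [realSpan]⟩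

lemma isRationalSubspace_top : IsRationalSubspace (⊤ : Submodule ℝ (EuclideanSpace ℝ (Fin n))) :=
  isRationalSubspace_iff.mpr ⟨⊤, Submodule.eq_top_of_finrank_eq (by simp [finrank_realSpan])⟩

lemma isRationalSubspace_finset_sup {ι : Type*} {f : ι → Submodule ℝ (EuclideanSpace ℝ (Fin n))}
    (hf : ∀ i, IsRationalSubspace (f i)) (s : Finset ι) : IsRationalSubspace (s.sup f) :=
  Finset.sup_induction isRationalSubspace_bot (fun _ h _ h' => h.sup h') fun i _ => hf i

lemma IsRationalSubspace.exists_le_finrank_eq {U : Submodule ℝ (EuclideanSpace ℝ (Fin n))}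
    (hU : IsRationalSubspace U) {e : ℕ} (hUe : finrank ℝ U ≤ e) (hen : e ≤ n) :
    ∃ B, IsRationalSubspace B ∧ U ≤ B ∧ finrank ℝ B = e := by
  obtain ⟨W, rfl⟩ := isRationalSubspace_iff.mp hU
  rw [finrank_realSpan] at hUe
  obtain ⟨W', hWW', hW'⟩ := W.exists_le_finrank_eq hUe (by simpa using hen)
  exact ⟨realSpan W', isRationalSubspace_iff.mpr ⟨W', rfl⟩, realSpan_mono hWW',
    by rw [finrank_realSpan, hW']⟩

lemma exists_rational_projection {K L : Submodule ℝ (EuclideanSpace ℝ (Fin n))}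
    (hK : IsRationalSubspace K) (hL : IsRationalSubspace L) (hKL : Disjoint K L) :
    ∃ p : EuclideanSpace ℝ (Fin n) →ₗ[ℝ] EuclideanSpace ℝ (Fin n),
      K ≤ LinearMap.ker p ∧ (∀ x ∈ L, p x = x) ∧
      ∀ B, IsRationalSubspace B → IsRationalSubspace (B.map p) := by
  obtain ⟨WK, rfl⟩ := isRationalSubspace_iff.mp hK
  obtain ⟨WL, rfl⟩ := isRationalSubspace_iff.mp hL
  have hdisj : Disjoint WK WL := Submodule.disjoint_def.mpr fun x hxK hxL =>
    ratVec_injective <| by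
      rw [map_zero]
      exact Submodule.disjoint_def.mp hKL _ (Submodule.subset_span ⟨x, hxK, rfl⟩)
        (Submodule.subset_span ⟨x, hxL, rfl⟩)
  obtain ⟨C, hC⟩ := exists_isCompl (WK ⊔ WL)
  have hcompl : IsCompl (WL ⊔ C) WK :=
    ⟨(hdisj.disjoint_sup_right_of_disjoint_sup_left hC.disjoint).symm,
      codisjoint_comm.mp (by rw [codisjoint_iff, ← sup_assoc]; exact hC.codisjoint.eq_top)⟩
  set q := (WL ⊔ C).projection WK hcompl
  refine ⟨realExt q, ?_, fun x hx => ?_, fun B hB => ?_⟩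
  · rw [realSpan, Submodule.span_le]
    rintro - ⟨x, hx, rfl⟩
    rw [SetLike.mem_coe, LinearMap.mem_ker, realExt_ratVec,
      (Submodule.projection_apply_eq_zero_iff hcompl).mpr hx, map_zero]
  · refine LinearMap.eqOn_span' (g := LinearMap.id) ?_ hx
    rintro - ⟨y, hy, rfl⟩
    rw [realExt_ratVec, Submodule.projection_apply_of_mem_left hcompl
      (Submodule.mem_sup_left hy), LinearMap.id_apply]
  · obtain ⟨W, rfl⟩ := isRationalSubspace_iff.mp hB
    exact isRationalSubspace_iff.mpr ⟨W.map q, (map_realExt_realSpan q W).symm⟩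

def rationalClosure (U : Submodule ℝ (EuclideanSpace ℝ (Fin n))) :
    Submodule ℝ (EuclideanSpace ℝ (Fin n)) :=
  sInf {B | IsRationalSubspace B ∧ U ≤ B}

lemma le_rationalClosure (U : Submodule ℝ (EuclideanSpace ℝ (Fin n))) : U ≤ rationalClosure U :=
  le_sInf fun _ hB => hB.2

lemma rationalClosure_le {U B : Submodule ℝ (EuclideanSpace ℝ (Fin n))}
    (hB : IsRationalSubspace B) (hUB : U ≤ B) : rationalClosure U ≤ B :=
  sInf_le ⟨hB, hUB⟩

lemma isRationalSubspace_rationalClosure (U : Submodule ℝ (EuclideanSpace ℝ (Fin n))) :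
    IsRationalSubspace (rationalClosure U) := by
  obtain ⟨B, ⟨hB, hUB⟩, hmin⟩ := wellFounded_lt.has_min {B | IsRationalSubspace B ∧ U ≤ B}
    ⟨⊤, isRationalSubspace_top, le_top⟩
  -- a minimal `B` lies below every other member `B'`, since `B ⊓ B'` is again a member
  have hBle : B ≤ rationalClosure U := le_sInf fun B' ⟨hB', hUB'⟩ =>
    inf_eq_left.mp <| (inf_le_left.lt_or_eq).resolve_left
      (hmin _ ⟨hB.inf hB', le_inf hUB hUB'⟩)
  rwa [le_antisymm (rationalClosure_le hB hUB) hBle]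

lemma exists_card_eq_finrank_sup_rationalClosure_le {ι : Type*} [Fintype ι]
    {A : ι → Submodule ℝ (EuclideanSpace ℝ (Fin n))} (hA : ∀ i, finrank ℝ (A i) = 1)
    (hE : iSupIndep fun i => rationalClosure (A i))
    {B : Submodule ℝ (EuclideanSpace ℝ (Fin n))} (hB : IsRationalSubspace B) {m : ℕ}
    (hm : m ≤ finrank ℝ ↥((⨆ i, A i) ⊓ B)) :
    ∃ J : Finset ι, J.card = m ∧
      finrank ℝ ↥(J.sup fun i => rationalClosure (A i)) ≤ finrank ℝ B := by
  classical
  set E := fun i => rationalClosure (A i)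
  set C := (⨆ i, A i) ⊓ B
  have hAind : iSupIndep A := hE.mono fun i => le_rationalClosure (A i)
  have hCA : C ≤ Finset.univ.sup A := inf_le_left.trans (Finset.sup_univ_eq_iSup A).ge
  obtain ⟨T, -, hCT, hAT⟩ := Finset.exists_subset_disjoint_sup_le
    (fun i => Submodule.isAtom_iff_finrank_eq_one.mpr (hA i)) C Finset.univ
  have hcard : m ≤ Tᶜ.card := by
    have hsum := Submodule.finrank_sup_add_finrank_inf_eq C (T.sup A)
    have hle := Submodule.finrank_mono (sup_le hCA (Finset.sup_mono (Finset.subset_univ T)))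
    rw [hCT.eq_bot, finrank_bot, (hAind.supIndep' T).finrank_sup] at hsum
    rw [(hAind.supIndep' _).finrank_sup] at hle
    simp only [hA, Finset.sum_const, smul_eq_mul, mul_one, Finset.card_univ] at hsum hle
    rw [Finset.card_compl]
    omega
  obtain ⟨p, hTp, hTcp, hp⟩ := exists_rational_projection
    (isRationalSubspace_finset_sup (fun i => isRationalSubspace_rationalClosure (A i)) T)
    (isRationalSubspace_finset_sup (fun i => isRationalSubspace_rationalClosure (A i)) Tᶜ)
    ((hE.supIndep' Finset.univ).disjoint_sup_sup (Finset.subset_univ _)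
      (Finset.subset_univ _) disjoint_compl_right)
  have hpB : (C ⊔ T.sup A).map p ≤ B.map p := Submodule.map_le_iff_le_comap.mpr <|
    sup_le (inf_le_right.trans (Submodule.le_comap_map p B))
      (((Finset.sup_mono_fun fun i _ => le_rationalClosure (A i)).trans hTp).trans
        (LinearMap.ker_le_comap p))
  have hTcB : Tᶜ.sup E ≤ B.map p := by
    refine Finset.sup_le fun i hi => rationalClosure_le (hp B hB) fun x hx => ?_
    rw [← hTcp x (Finset.le_sup (f := E) hi (le_rationalClosure _ hx))]
    exact hpB ⟨x, hAT (Finset.le_sup (f := A) (Finset.mem_univ i) hx), rfl⟩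
  obtain ⟨J, hJ, hJm⟩ := Finset.exists_subset_card_eq hcard
  exact ⟨J, hJm, (Submodule.finrank_mono ((Finset.sup_mono hJ).trans hTcB)).trans
    (Submodule.finrank_map_le p B)⟩

end

theorem statement11 (n d : ℕ)
    (R : Fin d → Submodule ℝ (EuclideanSpace ℝ (Fin n)))
    (hRrat : ∀ j, IsRationalSubspace (R j))
    (hRindep : iSupIndep R)
    (A : Fin d → Submodule ℝ (EuclideanSpace ℝ (Fin n)))
    (hAR : ∀ j, A j ≤ R j) (hA1 : ∀ j, finrank ℝ (A j) = 1)
    (e k : ℕ) (he2 : e ≤ n - 1) :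
    IsIrrational (⨆ j, A j) e k ↔
      ∀ J : Finset (Fin d), J.card = k + (d + e - n) →
        IsIrrational (⨆ j ∈ J, A j) e (k + (d + e - n) - (J.card + e - n)) := by
  have hrank := (hRindep.mono hAR).finrank_biSup_eq_card hA1
  have hrank_univ : finrank ℝ ↥(⨆ j, A j) = d := by
    rw [← Finset.sup_univ_eq_iSup, Finset.sup_eq_iSup, hrank, Finset.card_univ, Fintype.card_fin]
  constructor
  · intro h J hJ B hB hBe
    have hmono : finrank ℝ ↥((⨆ j ∈ J, A j) ⊓ B) ≤ finrank ℝ ↥((⨆ j, A j) ⊓ B) :=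
      Submodule.finrank_mono (inf_le_inf_right B (iSup₂_le fun j _ => le_iSup A j))
    have hAB := h B hB hBe
    rw [hrank_univ] at hAB
    rw [hrank, hJ]
    omega
  · intro h B hB hBe
    by_contra! hAB
    rw [hrank_univ] at hAB
    obtain ⟨J, hJ, hJE⟩ := exists_card_eq_finrank_sup_rationalClosure_le hA1
      (hRindep.mono fun j => rationalClosure_le (hRrat j) (hAR j)) hB hAB
    obtain ⟨B', hB', hJB', hB'e⟩ := (isRationalSubspace_finset_sup
      (fun j => isRationalSubspace_rationalClosure (A j)) J).exists_le_finrank_eq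
        (hJE.trans hBe.le) (by omega)
    have hAJB' : (⨆ j ∈ J, A j) ≤ B' := by
      rw [← Finset.sup_eq_iSup]
      exact (Finset.sup_mono_fun fun j _ => le_rationalClosure (A j)).trans hJB'
    have hAJ := h J hJ B' hB' hB'e
    rw [inf_eq_left.mpr hAJB', hrank, hJ] at hAJ
    omega
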